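/- For all fixed real numbers B, C > 1, the function A ↦ s(A, B, C) is strictly decreasing on the interval (1, 1+B+C] and strictly increasing on the interval [1+B+C, ∞). Consequently, A = 1 + B + C is the unique global minimizer of A ↦ s(A, B, C) on (1, ∞). (Sign analysis of the derivative formula of Lemma 2.1(3), used in the proof of Lemma 5.2 (lem:derivatives).) -/

import Mathlib

/-- The inverse hyperbolic cosine. -/
noncomputable def arcosh (x : ℝ) : ℝ := Real.log (x + Real.sqrt (x ^ 2 - 1))

/-- Total length of the three non-alternating sides of a right-angled hyperbolic
hexagon whose alternating sides have lengths `arcosh A`, `arcosh B`, `arcosh C`. -/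
noncomputable def s (A B C : ℝ) : ℝ :=
  arcosh ((A + B * C) / Real.sqrt ((B ^ 2 - 1) * (C ^ 2 - 1))) +
  arcosh ((B + A * C) / Real.sqrt ((A ^ 2 - 1) * (C ^ 2 - 1))) +
  arcosh ((C + A * B) / Real.sqrt ((A ^ 2 - 1) * (B ^ 2 - 1)))

/-!
With `Q = A² + B² + C² + 2ABC - 1`, each of the three sides of the hexagon satisfies
`cosh² - 1 = Q / ((·² - 1)(·² - 1))`, so their derivatives in `A` share the factor `1 / √Q`
and add up to `s'(A) = (A + 1)(A - (1 + B + C)) / ((A² - 1) √Q)`. This changes sign from `-`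
to `+` exactly at `A = 1 + B + C`.
-/

open Set

theorem HasDerivAt.arcosh {f : ℝ → ℝ} {f' x : ℝ} (hf : HasDerivAt f f' x) (hx : 1 < f x) :
    HasDerivAt (fun y => arcosh (f y)) (f' / √(f x ^ 2 - 1)) x := by
  rw [div_eq_mul_inv, mul_comm]
  -- `arcosh` unfolds to Mathlib's `Real.arcosh`
  exact (Real.hasDerivAt_arcosh hx).comp x hf

theorem strictAntiOn_Ioc_and_strictMonoOn_Ici_of_hasDerivAt {f f' : ℝ → ℝ} {a m : ℝ}
    (ham : a < m) (hf : ∀ x, a < x → HasDerivAt f (f' x) x)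
    (hneg : ∀ x, a < x → x < m → f' x < 0) (hpos : ∀ x, m < x → 0 < f' x) :
    StrictAntiOn f (Ioc a m) ∧ StrictMonoOn f (Ici m) := by
  constructor
  · refine strictAntiOn_of_hasDerivWithinAt_neg (f' := f') (convex_Ioc a m)
      (fun x hx => (hf x hx.1).continuousAt.continuousWithinAt) (fun x hx => ?_) (fun x hx => ?_)
    all_goals rw [interior_Ioc] at hx
    exacts [(hf x hx.1).hasDerivWithinAt, hneg x hx.1 hx.2]
  · refine strictMonoOn_of_hasDerivWithinAt_pos (f' := f') (convex_Ici m)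
      (fun x hx => (hf x (ham.trans_le hx)).continuousAt.continuousWithinAt)
      (fun x hx => ?_) (fun x hx => ?_)
    all_goals rw [interior_Ici] at hx
    exacts [(hf x (ham.trans hx)).hasDerivWithinAt, hpos x hx]

/-- Minus the determinant of the Gram matrix `!![1, -a, -b; -a, 1, -c; -b, -c, 1]`. -/
def hexagonGram (a b c : ℝ) : ℝ := a ^ 2 + b ^ 2 + c ^ 2 + 2 * a * b * c - 1

theorem hexagonGram_pos {a b c : ℝ} (ha : 1 < a) (hb : 0 ≤ b) (hc : 0 ≤ c) :
    0 < hexagonGram a b c := by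
  unfold hexagonGram
  have : 0 ≤ a * b * c := by positivity
  nlinarith

theorem hexagonGram_comm_left (a b c : ℝ) : hexagonGram b a c = hexagonGram a b c := by
  unfold hexagonGram; ring

theorem hexagonGram_comm_right (a b c : ℝ) : hexagonGram a c b = hexagonGram a b c := by
  unfold hexagonGram; ring

/-- Hexagon cosine law: the side opposite to the alternating side `arcosh a`. -/
noncomputable def hexagonSide (a b c : ℝ) : ℝ :=
  arcosh ((a + b * c) / √((b ^ 2 - 1) * (c ^ 2 - 1)))

theorem s_eq_hexagonSide (A B C : ℝ) :
    s A B C = hexagonSide A B C + hexagonSide B A C + hexagonSide C A B := rfl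

section hexagonSide

variable {a b c : ℝ}

theorem one_lt_hexagonSide_arg (ha : 1 < a) (hb : 1 < b) (hc : 1 < c) :
    1 < (a + b * c) / √((b ^ 2 - 1) * (c ^ 2 - 1)) := by
  have hP : 0 < (b ^ 2 - 1) * (c ^ 2 - 1) := mul_pos (by nlinarith) (by nlinarith)
  rw [one_lt_div (Real.sqrt_pos.2 hP), Real.sqrt_lt' (by positivity)]
  have hQ : 0 < hexagonGram a b c := hexagonGram_pos ha (by positivity) (by positivity)
  unfold hexagonGram at hQ
  linarith

theorem sqrt_sq_hexagonSide_arg_sub_one (hb : 1 < b) (hc : 1 < c) :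
    √(((a + b * c) / √((b ^ 2 - 1) * (c ^ 2 - 1))) ^ 2 - 1) =
      √(hexagonGram a b c) / √((b ^ 2 - 1) * (c ^ 2 - 1)) := by
  have hP : 0 < (b ^ 2 - 1) * (c ^ 2 - 1) := mul_pos (by nlinarith) (by nlinarith)
  rw [← Real.sqrt_div' _ hP.le, div_pow, Real.sq_sqrt hP.le]
  congr 1
  rw [eq_div_iff hP.ne', sub_mul, div_mul_cancel₀ _ hP.ne']
  unfold hexagonGram
  ring

theorem hasDerivAt_hexagonSide_left (ha : 1 < a) (hb : 1 < b) (hc : 1 < c) :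
    HasDerivAt (fun x => hexagonSide x b c) (1 / √(hexagonGram a b c)) a := by
  have hP : 0 < (b ^ 2 - 1) * (c ^ 2 - 1) := mul_pos (by nlinarith) (by nlinarith)
  have hk : 0 < √((b ^ 2 - 1) * (c ^ 2 - 1)) := Real.sqrt_pos.2 hP
  have hlin : HasDerivAt (fun x => (x + b * c) / √((b ^ 2 - 1) * (c ^ 2 - 1)))
      (1 / √((b ^ 2 - 1) * (c ^ 2 - 1))) a := by
    simpa using ((hasDerivAt_id a).add_const (b * c)).div_const (√((b ^ 2 - 1) * (c ^ 2 - 1)))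
  refine (hlin.arcosh (one_lt_hexagonSide_arg ha hb hc)).congr_deriv ?_
  rw [sqrt_sq_hexagonSide_arg_sub_one hb hc]
  field_simp

theorem hasDerivAt_hexagonSide_middle (ha : 1 < a) (hb : 1 < b) (hc : 1 < c) :
    HasDerivAt (fun y => hexagonSide a y c)
      (-(a * b + c) / ((b ^ 2 - 1) * √(hexagonGram a b c))) b := by
  have hb2 : 0 < b ^ 2 - 1 := by nlinarith
  have hc2 : 0 < c ^ 2 - 1 := by nlinarith
  have hP : 0 < (b ^ 2 - 1) * (c ^ 2 - 1) := mul_pos hb2 hc2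
  have hQ : 0 < hexagonGram a b c := hexagonGram_pos ha (by positivity) (by positivity)
  have hk : 0 < √((b ^ 2 - 1) * (c ^ 2 - 1)) := Real.sqrt_pos.2 hP
  have hnum : HasDerivAt (fun y => a + y * c) c b := by
    simpa using ((hasDerivAt_id b).mul_const c).const_add a
  have hden : HasDerivAt (fun y => √((y ^ 2 - 1) * (c ^ 2 - 1)))
      (b * (c ^ 2 - 1) / √((b ^ 2 - 1) * (c ^ 2 - 1))) b := by
    refine ((((hasDerivAt_pow 2 b).sub_const 1).mul_const (c ^ 2 - 1)).sqrt hP.ne').congr_deriv ?_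
    field_simp
    ring
  refine ((hnum.div hden hk.ne').arcosh (one_lt_hexagonSide_arg ha hb hc)).congr_deriv ?_
  rw [Pi.div_apply, sqrt_sq_hexagonSide_arg_sub_one hb hc, Real.sq_sqrt hP.le]
  field_simp
  linear_combination c * Real.sq_sqrt hP.le

end hexagonSide

theorem hasDerivAt_s {A B C : ℝ} (hA : 1 < A) (hB : 1 < B) (hC : 1 < C) :
    HasDerivAt (fun A => s A B C)
      ((A + 1) * (A - (1 + B + C)) / ((A ^ 2 - 1) * √(hexagonGram A B C))) A := by
  have h₁ := hasDerivAt_hexagonSide_left hA hB hC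
  have h₂ := hasDerivAt_hexagonSide_middle hB hA hC
  have h₃ := hasDerivAt_hexagonSide_middle hC hA hB
  rw [hexagonGram_comm_left] at h₂
  rw [hexagonGram_comm_left, hexagonGram_comm_right] at h₃
  have hA2 : 0 < A ^ 2 - 1 := by nlinarith
  have hQ : 0 < √(hexagonGram A B C) :=
    Real.sqrt_pos.2 (hexagonGram_pos hA (by positivity) (by positivity))
  simp only [s_eq_hexagonSide]
  refine ((h₁.add h₂).add h₃).congr_deriv ?_
  field_simp
  ring

theorem s_monotonicity_and_min (B C : ℝ) (hB : 1 < B) (hC : 1 < C) :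
    StrictAntiOn (fun A => s A B C) (Set.Ioc 1 (1 + B + C)) ∧
    StrictMonoOn (fun A => s A B C) (Set.Ici (1 + B + C)) ∧
    ∀ A, 1 < A → A ≠ 1 + B + C → s (1 + B + C) B C < s A B C := by
  have hden : ∀ A, 1 < A → 0 < (A ^ 2 - 1) * √(hexagonGram A B C) := fun A hA =>
    mul_pos (by nlinarith) (Real.sqrt_pos.2 (hexagonGram_pos hA (by positivity) (by positivity)))
  obtain ⟨hanti, hmono⟩ := strictAntiOn_Ioc_and_strictMonoOn_Ici_of_hasDerivAt
    (by linarith : (1 : ℝ) < 1 + B + C) (fun A hA => hasDerivAt_s hA hB hC)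
    (fun A hA hAm => div_neg_of_neg_of_pos
      (mul_neg_of_pos_of_neg (by linarith) (by linarith)) (hden A hA))
    (fun A hAm => div_pos (mul_pos (by linarith) (by linarith)) (hden A (by linarith)))
  refine ⟨hanti, hmono, fun A hA hne => ?_⟩
  rcases hne.lt_or_gt with hlt | hgt
  · exact hanti ⟨hA, hlt.le⟩ ⟨by linarith, le_rfl⟩ hlt
  · exact hmono self_mem_Ici hgt.le hgt
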